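/- arXiv:1702.06971 — 2 statements merged into one kernel-verified Lean document; each statement's English description precedes it below -/
import Mathlib

section
/- Existence of optimal dual potentials (dual of the assignment problem): for every m×m real matrix C there exist vectors α, β ∈ ℝᵐ and a permutation σ of [m] such that C_{ij} + α_j + β_i ≤ 0 for all i, j, and C_{i,σ(i)} + α_{σ(i)} + β_i = 0 for all i. Consequently Σᵢ C_{i,σ(i)} = −(Σⱼ αⱼ + Σᵢ βᵢ) and strong duality holds for the assignment LP. -/
open Finset

section Aux

variable {m : ℕ} [Nonempty (Fin m)]

/-- Row maximum of the reduced cost. -/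
noncomputable def hungM (C : Matrix (Fin m) (Fin m) ℝ) (a : Fin m → ℝ) (i : Fin m) : ℝ :=
  Finset.univ.sup' Finset.univ_nonempty fun j => C i j + a j

/-- Dual objective. -/
noncomputable def hungG (C : Matrix (Fin m) (Fin m) ℝ) (a : Fin m → ℝ) : ℝ :=
  (∑ i, hungM C a i) - ∑ j, a j

lemma le_hungM (C : Matrix (Fin m) (Fin m) ℝ) (a : Fin m → ℝ) (i j : Fin m) :
    C i j + a j ≤ hungM C a i := by
  unfold hungM; exact Finset.le_sup' (fun j => C i j + a j) (mem_univ j)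

lemma hungM_le (C : Matrix (Fin m) (Fin m) ℝ) (a : Fin m → ℝ) (i : Fin m) {x : ℝ}
    (h : ∀ j, C i j + a j ≤ x) : hungM C a i ≤ x := by
  unfold hungM; exact Finset.sup'_le _ _ fun j _ => h j

lemma exists_eq_hungM (C : Matrix (Fin m) (Fin m) ℝ) (a : Fin m → ℝ) (i : Fin m) :
    ∃ j, C i j + a j = hungM C a i := by
  obtain ⟨j, -, hj⟩ := Finset.exists_mem_eq_sup' (Finset.univ_nonempty (α := Fin m))
    (fun j => C i j + a j)
  exact ⟨j, hj.symm⟩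

lemma continuous_hungG (C : Matrix (Fin m) (Fin m) ℝ) : Continuous (hungG C) := by
  apply Continuous.sub
  · apply continuous_finset_sum
    intro i _
    exact Continuous.finset_sup'_apply Finset.univ_nonempty
      (fun j _ => continuous_const.add (continuous_apply j))
  · exact continuous_finset_sum _ fun j _ => continuous_apply j

/-- Existence of a global minimizer of the dual objective. -/
lemma exists_min_hungG (C : Matrix (Fin m) (Fin m) ℝ) :
    ∃ a : Fin m → ℝ, ∀ b : Fin m → ℝ, hungG C a ≤ hungG C b := by
  -- lower bound on entries of C
  set B : ℝ := Finset.univ.sup' Finset.univ_nonempty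
      (fun i => Finset.univ.sup' Finset.univ_nonempty (fun j => -C i j)) with hB
  have hCB : ∀ i j, -B ≤ C i j := by
    intro i j
    have h1 : -C i j ≤ Finset.univ.sup' Finset.univ_nonempty (fun j => -C i j) :=
      Finset.le_sup' (fun j => -C i j) (mem_univ j)
    have h2 : Finset.univ.sup' Finset.univ_nonempty (fun j => -C i j) ≤ B :=
      Finset.le_sup' (fun i => Finset.univ.sup' Finset.univ_nonempty (fun j => -C i j)) (mem_univ i)
    linarith
  -- key bound: if a ≤ 0 pointwise with some coordinate 0, then entries of a are ≥ -(g 0 + m B)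
  set R : ℝ := hungG C 0 + m * B with hRdef
  have hbound : ∀ a : Fin m → ℝ, (∀ j, a j ≤ 0) → (∃ j0, a j0 = 0) →
      hungG C a ≤ hungG C 0 → ∀ j, -R ≤ a j := by
    intro a hle ⟨j0, hj0⟩ hga j
    have hM : ∀ i, -B ≤ hungM C a i := fun i => by
      have := le_hungM C a i j0
      have := hCB i j0
      rw [hj0] at *
      linarith
    have hsum : -(m * B) ≤ ∑ i, hungM C a i := by
      have : ∑ i : Fin m, (-B) ≤ ∑ i, hungM C a i := Finset.sum_le_sum fun i _ => hM i
      simpa [mul_comm] using this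
    have hsa : -∑ k, a k ≤ hungG C 0 + m * B := by
      have h' : (∑ i, hungM C a i) - ∑ k, a k ≤ hungG C 0 := hga
      linarith
    have haj : a j ≥ ∑ k, a k := by
      have : ∑ k ∈ univ \ {j}, a k ≤ 0 :=
        Finset.sum_nonpos fun k _ => hle k
      have hsplit : ∑ k, a k = a j + ∑ k ∈ univ \ {j}, a k := by
        rw [← Finset.sum_sdiff (Finset.singleton_subset_iff.2 (mem_univ j))]
        simp [add_comm]
      linarith
    rw [hRdef]
    linarith
  have hR0 : 0 ≤ R := by
    have := hbound 0 (fun j => le_rfl) ⟨Classical.arbitrary (Fin m), rfl⟩ le_rfl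
      (Classical.arbitrary (Fin m))
    simpa using this
  -- minimize over the compact box
  set K : Set (Fin m → ℝ) := Set.Icc (fun _ => -R) 0 with hK
  have hKc : IsCompact K := isCompact_Icc
  have h0K : (0 : Fin m → ℝ) ∈ K := by
    constructor
    · intro j; simpa using neg_nonpos.2 hR0
    · intro j; exact le_rfl
  obtain ⟨a, haK, hamin⟩ := hKc.exists_isMinOn ⟨0, h0K⟩ (continuous_hungG C).continuousOn
  refine ⟨a, fun b => ?_⟩
  have ha0 : hungG C a ≤ hungG C 0 := hamin h0K
  -- translate b so that its max is 0
  set c : ℝ := Finset.univ.sup' Finset.univ_nonempty b with hc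
  set b' : Fin m → ℝ := fun j => b j - c with hb'
  have hgb' : hungG C b' = hungG C b := by
    unfold hungG
    have hM : ∀ i, hungM C b' i = hungM C b i - c := by
      intro i
      apply le_antisymm
      · apply hungM_le
        intro j
        have := le_hungM C b i j
        simp only [hb']
        linarith
      · rw [sub_le_iff_le_add]
        apply hungM_le
        intro j
        have := le_hungM C b' i j
        simp only [hb'] at this
        linarith
    rw [Finset.sum_congr rfl fun i _ => hM i, Finset.sum_sub_distrib]
    simp only [hb']
    rw [Finset.sum_sub_distrib]
    simp [Finset.sum_const, card_univ]
  have hb'le : ∀ j, b' j ≤ 0 := by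
    intro j
    have : b j ≤ c := Finset.le_sup' _ (mem_univ j)
    simp only [hb']
    linarith
  have hb'ex : ∃ j0, b' j0 = 0 := by
    obtain ⟨j0, -, hj0⟩ := Finset.exists_mem_eq_sup' (Finset.univ_nonempty (α := Fin m)) b
    exact ⟨j0, by simp [hb', hc, ← hj0]⟩
  by_cases hcase : hungG C 0 ≤ hungG C b'
  · calc hungG C a ≤ hungG C 0 := ha0
      _ ≤ hungG C b' := hcase
      _ = hungG C b := hgb'
  · push_neg at hcase
    have hmem : b' ∈ K := by
      constructor
      · intro j; exact hbound b' hb'le hb'ex hcase.le j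
      · intro j; exact hb'le j
    calc hungG C a ≤ hungG C b' := hamin hmem
      _ = hungG C b := hgb'

end Aux

/-- Existence of optimal dual potentials (strong duality for the assignment LP). -/
theorem exists_optimal_dual_potentials {m : ℕ} (C : Matrix (Fin m) (Fin m) ℝ) :
    ∃ (α β : Fin m → ℝ) (σ : Equiv.Perm (Fin m)),
      (∀ i j, C i j + α j + β i ≤ 0) ∧
      (∀ i, C i (σ i) + α (σ i) + β i = 0) ∧
      ∑ i, C i (σ i) = -((∑ j, α j) + (∑ i, β i)) := by
  classical
  rcases Nat.eq_zero_or_pos m with hm | hm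
  · subst hm
    exact ⟨0, 0, 1, fun i => i.elim0, fun i => i.elim0, by simp⟩
  haveI : Nonempty (Fin m) := ⟨⟨0, hm⟩⟩
  obtain ⟨α, hαmin⟩ := exists_min_hungG C
  -- tight sets
  set t : Fin m → Finset (Fin m) :=
    fun i => univ.filter (fun j => C i j + α j = hungM C α i) with ht
  have htmem : ∀ i j, j ∈ t i ↔ C i j + α j = hungM C α i := by
    intro i j; simp [ht]
  have htne : ∀ i, (t i).Nonempty := by
    intro i
    obtain ⟨j, hj⟩ := exists_eq_hungM C α i
    exact ⟨j, (htmem i j).2 hj⟩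
  -- Hall's condition for the tight graph
  have hall : ∀ s : Finset (Fin m), s.card ≤ (s.biUnion t).card := by
    by_contra hcon
    push_neg at hcon
    obtain ⟨A, hA⟩ := hcon
    set N : Finset (Fin m) := A.biUnion t with hN
    -- gap set
    set S : Finset (Fin m × Fin m) :=
      (A ×ˢ univ).filter (fun p => p.2 ∉ t p.1) with hS
    have hAne : A.Nonempty := by
      rw [← Finset.card_pos]
      exact lt_of_le_of_lt (Nat.zero_le _) hA
    have hSne : S.Nonempty := by
      obtain ⟨i, hi⟩ := hAne
      have : t i ≠ univ := by
        intro heq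
        have h1 : (univ : Finset (Fin m)) ⊆ N := heq ▸ Finset.subset_biUnion_of_mem t hi
        have h2 : N.card = m := le_antisymm (by simpa using N.card_le_univ)
          (by simpa [card_univ] using Finset.card_le_card h1)
        have h3 : A.card ≤ m := by simpa [card_univ] using A.card_le_univ
        omega
      obtain ⟨j, hj⟩ : ∃ j, j ∉ t i := by
        by_contra hc
        push_neg at hc
        exact this (Finset.eq_univ_iff_forall.2 hc)
      exact ⟨(i, j), by simp [hS, Finset.mem_product, hi, hj]⟩
    set δ : ℝ := S.inf' hSne (fun p => hungM C α p.1 - (C p.1 p.2 + α p.2)) with hδ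
    have hδpos : 0 < δ := by
      rw [hδ]
      rw [Finset.lt_inf'_iff]
      rintro ⟨i, j⟩ hij
      simp only [hS, Finset.mem_filter, Finset.mem_product] at hij
      have hle := le_hungM C α i j
      have hne : C i j + α j ≠ hungM C α i := fun h => hij.2 ((htmem i j).2 h)
      have := lt_of_le_of_ne hle hne
      linarith
    have hδle : ∀ i ∈ A, ∀ j, j ∉ N → hungM C α i - (C i j + α j) ≥ δ := by
      intro i hi j hj
      have hjt : j ∉ t i := fun h => hj (Finset.mem_biUnion.2 ⟨i, hi, h⟩)
      have hmem : (i, j) ∈ S := by simp [hS, Finset.mem_product, hi, hjt]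
      exact Finset.inf'_le _ hmem
    -- perturbed potential
    set α' : Fin m → ℝ := fun j => α j - (if j ∈ N then δ else 0) with hα'
    have hMle : ∀ i, hungM C α' i ≤ hungM C α i := by
      intro i
      apply hungM_le
      intro j
      have := le_hungM C α i j
      simp only [hα']
      split <;> linarith
    have hMA : ∀ i ∈ A, hungM C α' i ≤ hungM C α i - δ := by
      intro i hi
      apply hungM_le
      intro j
      by_cases hj : j ∈ N
      · have := le_hungM C α i j
        simp only [hα', if_pos hj]
        linarith
      · have := hδle i hi j hj
        simp only [hα', if_neg hj]
        linarith
    -- sum of the perturbation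
    have hsumα' : ∑ j, α' j = (∑ j, α j) - δ * N.card := by
      simp only [hα']
      rw [Finset.sum_sub_distrib]
      congr 1
      rw [Finset.sum_ite_mem, Finset.univ_inter, Finset.sum_const, nsmul_eq_mul, mul_comm]
    have hsumM : ∑ i, hungM C α' i ≤ (∑ i, hungM C α i) - δ * A.card := by
      have step : ∀ i, hungM C α' i ≤ hungM C α i - (if i ∈ A then δ else 0) := by
        intro i
        by_cases hi : i ∈ A
        · simpa [if_pos hi] using hMA i hi
        · simpa [if_neg hi] using hMle i
      calc ∑ i, hungM C α' i ≤ ∑ i, (hungM C α i - if i ∈ A then δ else 0) :=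
            Finset.sum_le_sum fun i _ => step i
        _ = (∑ i, hungM C α i) - δ * A.card := by
            rw [Finset.sum_sub_distrib]
            congr 1
            rw [Finset.sum_ite_mem, Finset.univ_inter, Finset.sum_const, nsmul_eq_mul, mul_comm]
    have hglt : hungG C α' < hungG C α := by
      unfold hungG
      rw [hsumα']
      have hcard : (N.card : ℝ) < A.card := by exact_mod_cast hA
      have : δ * N.card < δ * A.card := by
        exact mul_lt_mul_of_pos_left hcard hδpos
      linarith [hsumM]
    exact absurd (hαmin α') (not_le.2 hglt)
  -- extract a perfect matching
  obtain ⟨f, hfinj, hft⟩ := (Finset.all_card_le_biUnion_card_iff_exists_injective t).1 hall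
  have hfbij : Function.Bijective f := Finite.injective_iff_bijective.1 hfinj
  set σ : Equiv.Perm (Fin m) := Equiv.ofBijective f hfbij with hσ
  set β : Fin m → ℝ := fun i => -(hungM C α i) with hβ
  refine ⟨α, β, σ, ?_, ?_, ?_⟩
  · intro i j
    have := le_hungM C α i j
    simp only [hβ]
    linarith
  · intro i
    have hσi : σ i = f i := rfl
    have := (htmem i (f i)).1 (hft i)
    simp only [hβ, hσi]
    linarith
  · have heq : ∀ i, C i (σ i) = -(α (σ i)) - β i := by
      intro i
      have hσi : σ i = f i := rfl
      have := (htmem i (f i)).1 (hft i)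
      simp only [hβ, hσi]
      linarith
    rw [Finset.sum_congr rfl fun i _ => heq i, Finset.sum_sub_distrib]
    have : ∑ i, α (σ i) = ∑ j, α j := Equiv.sum_comp σ α
    rw [Finset.sum_neg_distrib, this]
    ring
end

section
/- The greedy algorithm for maximum-weight matching is a 1/2-approximation: if M is a maximal matching in an edge-weighted graph constructed greedily by repeatedly adding the heaviest remaining edge compatible with the current matching, and M* is any matching, then the total weight of M is at least half the total weight of M*. -/
/-- The greedy algorithm for maximum-weight matching is a 1/2-approximation:
if `M` is a matching such that every edge of `G` is either in `M` or shares an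
endpoint with an edge of `M` of at least its weight, then any matching `Mstar`
has at most twice the weight of `M`. -/
theorem greedy_matching_half_approx {V : Type*} [Fintype V] [DecidableEq V]
    (G : SimpleGraph V) (w : Sym2 V → ℝ) (hw : ∀ e, 0 ≤ w e)
    (M Mstar : Finset (Sym2 V))
    (hM : ↑M ⊆ G.edgeSet) (hMstar : ↑Mstar ⊆ G.edgeSet)
    (hMmatch : ∀ e ∈ M, ∀ f ∈ M, e ≠ f → ∀ v, v ∈ e → v ∉ f)
    (hMstarmatch : ∀ e ∈ Mstar, ∀ f ∈ Mstar, e ≠ f → ∀ v, v ∈ e → v ∉ f)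
    (hgreedy : ∀ e ∈ G.edgeSet, e ∉ M → ∃ f ∈ M, (∃ v, v ∈ e ∧ v ∈ f) ∧ w e ≤ w f) :
    ∑ e ∈ Mstar, w e ≤ 2 * ∑ e ∈ M, w e := by
  classical
  have hg' : ∀ e : Sym2 V, ∃ f : Sym2 V,
      e ∈ Mstar → f ∈ M ∧ (∃ v, v ∈ e ∧ v ∈ f) ∧ w e ≤ w f := by
    intro e
    by_cases he : e ∈ Mstar
    · by_cases h : e ∈ M
      · exact ⟨e, fun _ => ⟨h, ⟨e.out.1, e.out_fst_mem, e.out_fst_mem⟩, le_rfl⟩⟩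
      · obtain ⟨f, hf, hv, hwf⟩ := hgreedy e (hMstar he) h
        exact ⟨f, fun _ => ⟨hf, hv, hwf⟩⟩
    · exact ⟨e, fun h => absurd h he⟩
  choose g hg using hg'
  have key : ∀ f ∈ M, (Mstar.filter (fun e => g e = f)).card ≤ 2 := by
    intro f hf
    set s := Mstar.filter (fun e => g e = f) with hs
    have hφ : ∀ e ∈ s, ∃ v, v ∈ e ∧ v ∈ f := by
      intro e he
      rw [hs, Finset.mem_filter] at he
      obtain ⟨-, hv, -⟩ := hg e he.1
      rw [he.2] at hv
      exact hv
    set φ : Sym2 V → V := fun e =>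
      if h : ∃ v, v ∈ e ∧ v ∈ f then h.choose else f.out.1 with hφdef
    have hmem : ∀ e ∈ s, φ e ∈ e ∧ φ e ∈ f := by
      intro e he
      have h := hφ e he
      simp only [hφdef, dif_pos h]
      exact h.choose_spec
    have hcard : s.card ≤ ({f.out.1, f.out.2} : Finset V).card := by
      apply Finset.card_le_card_of_injOn φ
      · intro e he
        have := (hmem e he).2
        conv at this => rw [← f.out_eq]
        rw [Sym2.mem_iff] at this
        simp [this]
      · intro e1 h1 e2 h2 heq
        by_contra hne
        exact hMstarmatch e1 (Finset.mem_filter.1 h1).1 e2 (Finset.mem_filter.1 h2).1 hne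
          (φ e1) (hmem e1 h1).1 (heq ▸ (hmem e2 h2).1)
    calc s.card ≤ ({f.out.1, f.out.2} : Finset V).card := hcard
      _ ≤ 2 := by
        refine le_trans (Finset.card_insert_le _ _) ?_
        simp
  calc ∑ e ∈ Mstar, w e ≤ ∑ e ∈ Mstar, w (g e) :=
        Finset.sum_le_sum (fun e he => (hg e he).2.2)
    _ = ∑ f ∈ M, ∑ e ∈ Mstar.filter (fun e => g e = f), w (g e) :=
        (Finset.sum_fiberwise_of_maps_to (fun e he => (hg e he).1) _).symm
    _ ≤ ∑ f ∈ M, 2 * w f := by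
        refine Finset.sum_le_sum (fun f hf => ?_)
        have : ∑ e ∈ Mstar.filter (fun e => g e = f), w (g e)
            = ∑ _e ∈ Mstar.filter (fun e => g e = f), w f := by
          refine Finset.sum_congr rfl (fun e he => ?_)
          rw [(Finset.mem_filter.1 he).2]
        rw [this, Finset.sum_const, nsmul_eq_mul]
        exact mul_le_mul_of_nonneg_right (by exact_mod_cast key f hf) (hw f)
    _ = 2 * ∑ f ∈ M, w f := (Finset.mul_sum _ _ _).symm
end
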